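/- arXiv:2212.04166 — 2 statements merged into one kernel-verified Lean document; each statement's English description precedes it below -/
import Mathlib

section
/- Let G be the n×m grid graph with n,m ≥ 2, and let x_{i,j} be an inner vertex (1 < i < n, 1 < j < m). Then the set of vertices maximally distant from x_{i,j} is exactly the four corners {x_{1,1}, x_{n,1}, x_{1,m}, x_{n,m}}. -/
open SimpleGraph

/-- `y` is maximally distant from `x` in `G`: no neighbor of `y` is farther from `x` than `y`. -/
def MaxDistantFrom {V : Type*} (G : SimpleGraph V) (y x : V) : Prop :=
  ∀ z, G.Adj y z → G.dist z x ≤ G.dist y x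

/-- `u` and `v` are mutually maximally distant in `G`. -/
def MutuallyMaxDistant {V : Type*} (G : SimpleGraph V) (u v : V) : Prop :=
  MaxDistantFrom G u v ∧ MaxDistantFrom G v u

/-- The strong resolving graph of `G`: edges are the mutually maximally distant pairs. -/
def srGraph {V : Type*} (G : SimpleGraph V) : SimpleGraph V where
  Adj u v := u ≠ v ∧ MutuallyMaxDistant G u v
  symm := ⟨fun u v h => ⟨h.1.symm, h.2.2, h.2.1⟩⟩
  loopless := ⟨fun u h => h.1 rfl⟩

/-- `w` strongly resolves `u` and `v`: `v` lies on a shortest `w`–`u` path, or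
`u` lies on a shortest `w`–`v` path. -/
def StronglyResolves {V : Type*} (G : SimpleGraph V) (w u v : V) : Prop :=
  G.dist w v + G.dist v u = G.dist w u ∨ G.dist w u + G.dist u v = G.dist w v

/-- `R` is a strong resolving set for `G`. -/
def StrongResolvingSet {V : Type*} (G : SimpleGraph V) (R : Set V) : Prop :=
  ∀ u v : V, u ≠ v → ∃ w ∈ R, StronglyResolves G w u v
/-- The `n × m` grid graph: vertices `(i, j)` with `0 ≤ i < n`, `0 ≤ j < m`,
adjacent iff at Manhattan distance `1`. -/
def gridGraph (n m : ℕ) : SimpleGraph (Fin n × Fin m) :=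
  SimpleGraph.fromRel (fun a b => Nat.dist a.1.1 b.1.1 + Nat.dist a.2.1 b.2.1 = 1)

/-!
The grid is the box product of two paths, so distances add coordinatewise and a vertex is
maximally distant from `x` in the grid exactly when each coordinate is maximally distant in its
path. In a path, a vertex other than an endpoint always has a neighbour farther from `x`
(away from `x`, or either neighbour if it is `x`), while an endpoint is maximally distant
from any vertex other than itself.
-/

namespace SimpleGraph

variable {α β : Type*} {G : SimpleGraph α} {H : SimpleGraph β}

lemma dist_boxProd (hG : G.Preconnected) (hH : H.Preconnected) (x y : α × β) :
    (G □ H).dist x y = G.dist x.1 y.1 + H.dist x.2 y.2 := by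
  rw [← ENat.natCast_inj, ENat.natCast_add, (hG x.1 y.1).coe_dist_eq_edist,
    (hH x.2 y.2).coe_dist_eq_edist, ← edist_boxProd,
    (reachable_boxProd.2 ⟨hG x.1 y.1, hH x.2 y.2⟩).coe_dist_eq_edist]

lemma maxDistantFrom_boxProd_iff (hG : G.Preconnected) (hH : H.Preconnected) (y x : α × β) :
    MaxDistantFrom (G □ H) y x ↔ MaxDistantFrom G y.1 x.1 ∧ MaxDistantFrom H y.2 x.2 := by
  simp only [MaxDistantFrom, dist_boxProd hG hH]
  constructor
  · intro h
    refine ⟨fun a ha => ?_, fun b hb => ?_⟩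
    · simpa using h (a, y.2) (boxProd_adj_left.2 ha)
    · simpa using h (y.1, b) (boxProd_adj_right.2 hb)
  · rintro ⟨h₁, h₂⟩ z (⟨hz, hz₂⟩ | ⟨hz, hz₁⟩)
    · rw [← hz₂]; exact Nat.add_le_add_right (h₁ _ hz) _
    · rw [← hz₁]; exact Nat.add_le_add_left (h₂ _ hz) _

lemma pathGraph_dist_le_of_val_add_eq {n : ℕ} (k : ℕ) {u v : Fin n} (h : u.val + k = v.val) :
    (pathGraph n).dist u v ≤ k := by
  induction k generalizing u with
  | zero => simp [Fin.ext (by simpa using h)]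
  | succ k ih =>
    let w : Fin n := ⟨u.val + 1, by omega⟩
    have huw : (pathGraph n).Adj u w := pathGraph_adj.2 (Or.inl rfl)
    calc (pathGraph n).dist u v ≤ (pathGraph n).dist u w + (pathGraph n).dist w v :=
          huw.reachable.dist_triangle_left v
      _ ≤ 1 + k := by
          rw [dist_eq_one_iff_adj.2 huw]; exact Nat.add_le_add_left (ih (by simp only [w]; omega)) 1
      _ = k + 1 := Nat.add_comm 1 k

lemma pathGraph_natDist_le_walk_length {n : ℕ} {u v : Fin n} (p : (pathGraph n).Walk u v) :
    Nat.dist u v ≤ p.length := by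
  induction p with
  | nil => simp
  | @cons a b c hab p ih =>
    have htri := Nat.dist.triangle_inequality a b c
    have hstep : Nat.dist a b = 1 := by
      rcases pathGraph_adj.1 hab with h | h <;> simp only [Nat.dist] <;> omega
    simp only [Walk.length_cons]; omega

lemma pathGraph_dist {n : ℕ} (u v : Fin n) : (pathGraph n).dist u v = Nat.dist u v := by
  refine le_antisymm ?_ ?_
  · rcases le_total u v with h | h
    · exact pathGraph_dist_le_of_val_add_eq _ (by simp only [Nat.dist]; omega)
    · rw [dist_comm, Nat.dist_comm]
      exact pathGraph_dist_le_of_val_add_eq _ (by simp only [Nat.dist]; omega)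
  · obtain ⟨p, hp⟩ := (pathGraph_preconnected n u v).exists_walk_length_eq_dist
    exact hp ▸ pathGraph_natDist_le_walk_length p

lemma maxDistantFrom_pathGraph_iff {n : ℕ} {x : Fin n} (hx : 0 < x.val ∧ x.val < n - 1)
    (y : Fin n) : MaxDistantFrom (pathGraph n) y x ↔ y.val = 0 ∨ y.val = n - 1 := by
  simp only [MaxDistantFrom, pathGraph_dist, pathGraph_adj]
  constructor
  · intro h
    by_contra! hy
    rcases lt_or_ge y.val x.val with hyx | hxy
    · have := h ⟨y.val - 1, by omega⟩ (Or.inr (by simp only; omega))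
      simp only [Nat.dist] at this; omega
    · have := h ⟨y.val + 1, by omega⟩ (Or.inl rfl)
      simp only [Nat.dist] at this; omega
  · rintro hy z hz
    simp only [Nat.dist]; omega

end SimpleGraph

open SimpleGraph

lemma gridGraph_eq_boxProd (n m : ℕ) : gridGraph n m = pathGraph n □ pathGraph m := by
  ext a b
  simp only [gridGraph, fromRel_adj, boxProd_adj, pathGraph_adj, Nat.dist, ne_eq, Prod.ext_iff,
    Fin.ext_iff]
  omega

/-- In the `n × m` grid (`n, m ≥ 2`), the set of vertices maximally distant from an inner
vertex is exactly the set of the four corners. -/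
theorem grid_maxDistant_from_inner {n m : ℕ}
    (x : Fin n × Fin m)
    (hx1 : 0 < x.1.1 ∧ x.1.1 < n - 1) (hx2 : 0 < x.2.1 ∧ x.2.1 < m - 1) :
    {y | MaxDistantFrom (gridGraph n m) y x} =
      {((⟨0, by omega⟩ : Fin n), (⟨0, by omega⟩ : Fin m)),
       ((⟨n - 1, by omega⟩ : Fin n), (⟨0, by omega⟩ : Fin m)),
       ((⟨0, by omega⟩ : Fin n), (⟨m - 1, by omega⟩ : Fin m)),
       ((⟨n - 1, by omega⟩ : Fin n), (⟨m - 1, by omega⟩ : Fin m))} := by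
  ext y
  simp only [Set.mem_ofPred_eq, gridGraph_eq_boxProd,
    maxDistantFrom_boxProd_iff (pathGraph_preconnected n) (pathGraph_preconnected m),
    maxDistantFrom_pathGraph_iff hx1, maxDistantFrom_pathGraph_iff hx2,
    Set.mem_insert_iff, Set.mem_singleton_iff, Prod.ext_iff, Fin.ext_iff]
  tauto
end

section
/- The strong resolving graph of a connected cograph is again a cograph. -/
/-!
A connected cograph has diameter at most two: the first four vertices of a longer geodesic
would induce a `P₄`. At diameter two every non-adjacent pair is mutually maximally distant,
while an adjacent pair is so exactly when the two vertices are true twins, i.e. have the same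
closed neighbourhood. For an induced path `a – b – c – d` of the strong resolving graph, the
pairs `ac`, `bd`, `ad` are therefore edges of `G` between non-twins. Being twins is transitive
and propagates adjacency, which forces `ab`, `bc`, `cd` to be non-edges of `G`; but then
`c – a – d – b` is an induced `P₄` in `G`.
-/

open SimpleGraph

/-- A cograph: a graph with no induced path on four vertices. -/
def IsCograph {V : Type*} (G : SimpleGraph V) : Prop :=
  IsEmpty (SimpleGraph.pathGraph 4 ↪g G)

theorem isCograph_iff {V : Type*} {G : SimpleGraph V} :
    IsCograph G ↔ ∀ a b c d, a ≠ c → b ≠ d → G.Adj a b → G.Adj b c → G.Adj c d →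
      G.Adj a c ∨ G.Adj b d ∨ G.Adj a d := by
  constructor
  · intro hco a b c d hac hbd hab hbc hcd
    by_contra! h
    have had : a ≠ d := by rintro rfl; exact h.1 hcd.symm
    refine hco.false ⟨⟨![a, b, c, d], fun i j hij => ?_⟩, fun {i j} => ?_⟩
    · fin_cases i <;> fin_cases j <;> simp_all [eq_comm]
    · show G.Adj (![a, b, c, d] i) (![a, b, c, d] j) ↔ _
      fin_cases i <;> fin_cases j <;> simp_all [pathGraph_adj, G.adj_comm]
  · refine fun hco => ⟨fun e => ?_⟩
    have he {i j : Fin 4} : G.Adj (e i) (e j) ↔ i.val + 1 = j.val ∨ j.val + 1 = i.val := by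
      rw [e.map_rel_iff, pathGraph_adj]
    rcases hco (e 0) (e 1) (e 2) (e 3) (by simp) (by simp) (he.2 (by decide))
      (he.2 (by decide)) (he.2 (by decide)) with h | h | h <;> simp [he] at h

namespace SimpleGraph

variable {V : Type*} {G : SimpleGraph V}

lemma Walk.dist_getVert_of_length_eq_dist {u v : V} {p : G.Walk u v}
    (hp : p.length = G.dist u v) {i : ℕ} (hi : i ≤ p.length) : G.dist u (p.getVert i) = i := by
  rw [← length_eq_dist_of_subwalk hp (p.isSubwalk_take i), Walk.take_length]
  exact min_eq_left hi

theorem Connected.dist_le_two_of_isCograph (hG : G.Connected) (hco : IsCograph G) (u v : V) :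
    G.dist u v ≤ 2 := by
  by_contra! h
  obtain ⟨p, hp⟩ := hG.exists_walk_length_eq_dist u v
  have hdist (i : ℕ) (hi : i ≤ 3) : G.dist u (p.getVert i) = i :=
    p.dist_getVert_of_length_eq_dist hp (by omega)
  have hadj (i : ℕ) (hi : i < 3) : G.Adj (p.getVert i) (p.getVert (i + 1)) :=
    p.adj_getVert_succ (by omega)
  have hnadj (i j : ℕ) (hij : i + 2 ≤ j) (hj : j ≤ 3) : ¬G.Adj (p.getVert i) (p.getVert j) :=
    fun h => by
      have := h.reachable.dist_triangle_right u
      rw [hdist j hj, hdist i (by omega), dist_eq_one_iff_adj.mpr h] at this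
      omega
  have hne (i j : ℕ) (hij : i < j) (hj : j ≤ 3) : p.getVert i ≠ p.getVert j :=
    fun h => by have := hdist j hj; rw [← h, hdist i (by omega)] at this; omega
  rcases isCograph_iff.mp hco _ _ _ _ (hne 0 2 (by norm_num) (by norm_num))
    (hne 1 3 (by norm_num) (by norm_num)) (hadj 0 (by norm_num)) (hadj 1 (by norm_num))
    (hadj 2 (by norm_num)) with h | h | h
  · exact hnadj 0 2 (by norm_num) (by norm_num) h
  · exact hnadj 1 3 (by norm_num) (by norm_num) h
  · exact hnadj 0 3 (by norm_num) (by norm_num) h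

def closedNeighborSet (G : SimpleGraph V) (v : V) : Set V :=
  insert v (G.neighborSet v)

lemma Adj.adj_of_closedNeighborSet_eq {u v w : V} (h : G.Adj u w)
    (hN : G.closedNeighborSet u = G.closedNeighborSet v) (hw : w ≠ v) : G.Adj v w := by
  have hwv : w ∈ G.closedNeighborSet v := hN ▸ Or.inr h
  exact hwv.resolve_left hw

end SimpleGraph

section

variable {V : Type*} {G : SimpleGraph V}

theorem maxDistantFrom_iff_of_adj {x y : V} (h : G.Adj y x) :
    MaxDistantFrom G y x ↔ G.closedNeighborSet y ⊆ G.closedNeighborSet x := by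
  have hyx : G.dist y x = 1 := dist_eq_one_iff_adj.mpr h
  refine ⟨fun hmax z hz => ?_, fun hsub z hz => ?_⟩
  · rcases hz with rfl | hz
    · exact Or.inr h.symm
    · have hzx := hmax z hz
      rw [hyx] at hzx
      rcases Nat.le_one_iff_eq_zero_or_eq_one.mp hzx with h0 | h1
      · exact Or.inl ((hz.symm.reachable.trans h.reachable).dist_eq_zero_iff.mp h0)
      · exact Or.inr (dist_eq_one_iff_adj.mp h1).symm
  · rcases hsub (Or.inr hz) with rfl | hxz
    · simp
    · rw [hyx, dist_eq_one_iff_adj.mpr hxz.symm]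

theorem mutuallyMaxDistant_iff_of_adj {u v : V} (h : G.Adj u v) :
    MutuallyMaxDistant G u v ↔ G.closedNeighborSet u = G.closedNeighborSet v := by
  rw [MutuallyMaxDistant, maxDistantFrom_iff_of_adj h, maxDistantFrom_iff_of_adj h.symm,
    Set.Subset.antisymm_iff]

theorem mutuallyMaxDistant_of_not_adj (hG : G.Connected) (hdiam : ∀ x y, G.dist x y ≤ 2)
    {u v : V} (hne : u ≠ v) (h : ¬G.Adj u v) : MutuallyMaxDistant G u v := by
  have huv := hG.one_lt_dist_of_ne_of_not_adj hne h
  have hvu := hG.one_lt_dist_of_ne_of_not_adj hne.symm (h ∘ G.adj_symm)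
  exact ⟨fun z _ => (hdiam z v).trans huv, fun z _ => (hdiam z u).trans hvu⟩

theorem srGraph_adj_iff (hG : G.Connected) (hdiam : ∀ x y, G.dist x y ≤ 2) {u v : V} :
    (srGraph G).Adj u v ↔
      u ≠ v ∧ (G.Adj u v → G.closedNeighborSet u = G.closedNeighborSet v) := by
  refine and_congr_right fun hne => ?_
  by_cases h : G.Adj u v
  · simp [h, mutuallyMaxDistant_iff_of_adj h]
  · simp [h, mutuallyMaxDistant_of_not_adj hG hdiam hne h]

end

theorem srGraph_cograph_general {V : Type*} (G : SimpleGraph V)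
    (hG : G.Connected) (hco : IsCograph G) : IsCograph (srGraph G) := by
  have hsr {u v : V} := srGraph_adj_iff hG (hG.dist_le_two_of_isCograph hco) (u := u) (v := v)
  have hnon {u v : V} (hne : u ≠ v) (h : ¬(srGraph G).Adj u v) :
      G.Adj u v ∧ G.closedNeighborSet u ≠ G.closedNeighborSet v := by
    rw [hsr] at h; tauto
  rw [isCograph_iff] at hco ⊢
  intro a b c d hac hbd hab hbc hcd
  by_contra! h
  have had : a ≠ d := by rintro rfl; exact h.1 hcd.symm
  obtain ⟨hGac, -⟩ := hnon hac h.1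
  obtain ⟨hGbd, -⟩ := hnon hbd h.2.1
  obtain ⟨hGad, hNad⟩ := hnon had h.2.2
  rw [hsr] at hab hbc hcd
  have hbc' : ¬G.Adj b c := fun hGbc => by
    have hNbc := hbc.2 hGbc
    have hNab := hab.2 (hGac.symm.adj_of_closedNeighborSet_eq hNbc.symm hab.1).symm
    have hNcd := hcd.2 (hGbd.adj_of_closedNeighborSet_eq hNbc hcd.1.symm)
    exact hNad (hNab.trans (hNbc.trans hNcd))
  have hab' : ¬G.Adj a b := fun hGab =>
    hbc' (hGac.adj_of_closedNeighborSet_eq (hab.2 hGab) hbc.1.symm)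
  have hcd' : ¬G.Adj c d := fun hGcd =>
    hbc' (hGbd.symm.adj_of_closedNeighborSet_eq (hcd.2 hGcd).symm hbc.1).symm
  -- `c – a – d – b` is an induced path in `G`
  rcases hco c a d b hcd.1 hab.1 hGac.symm hGad hGbd.symm with h | h | h
  exacts [hcd' h, hab' h, hbc' h.symm]

/-- The strong resolving graph of a connected cograph is again a cograph. -/
theorem srGraph_cograph {V : Type*} [Fintype V] (G : SimpleGraph V)
    (hG : G.Connected) (hco : IsCograph G) : IsCograph (srGraph G) :=
  srGraph_cograph_general G hG hco
end
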